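/- arXiv:nlin/0311058 — 2 statements merged into one kernel-verified Lean document; each statement's English description precedes it below -/
import Mathlib

section
/- Let Y(z) = (1/2)·tanh(z/2 + φ₀), so Y' = -Y² + 1/4. Then for any C₀ ∈ ℝ, the function y(z) = 9/2 + C₀ - 15Y - 30Y² + 60Y³ satisfies the Kuramoto–Sivashinsky travelling-wave equation y''' + y² + 4y'' + y' - 2C₀y + C₀² - 9 = 0 on ℝ. -/
/-!
`Y = tanh(z/2 + φ₀)/2` solves the Riccati equation `Y' = 1/4 - Y²`, so every polynomial `P(Y)`
differentiates to the polynomial `(P' · (1/4 - X²))(Y)`. The three derivatives of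
`y = P(Y)` are therefore polynomials in `Y`, and the travelling-wave equation reduces to a
polynomial identity in `Y`.
-/

open Polynomial

theorem Real.hasDerivAt_tanh (x : ℝ) : HasDerivAt Real.tanh (1 - Real.tanh x ^ 2) x := by
  have hcosh : Real.cosh x ≠ 0 := (Real.cosh_pos x).ne'
  have hquot := (Real.hasDerivAt_sinh x).div (Real.hasDerivAt_cosh x) hcosh
  rw [← show Real.tanh = Real.sinh / Real.cosh from funext Real.tanh_eq_sinh_div_cosh] at hquot
  refine hquot.congr_deriv ?_
  rw [Real.tanh_eq_sinh_div_cosh]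
  field_simp

theorem hasDerivAt_half_tanh (φ₀ z : ℝ) :
    HasDerivAt (fun z => 1 / 2 * Real.tanh (z / 2 + φ₀))
      (-(1 / 2 * Real.tanh (z / 2 + φ₀)) ^ 2 + 1 / 4) z := by
  have hinner : HasDerivAt (fun z : ℝ => z / 2 + φ₀) (1 / 2) z := by
    simpa using ((hasDerivAt_id z).div_const 2).add_const φ₀
  exact (((Real.hasDerivAt_tanh _).comp z hinner).const_mul (1 / 2 : ℝ)).congr_deriv (by ring)

theorem Polynomial.deriv_eval_comp_of_hasDerivAt {𝕜 : Type*} [NontriviallyNormedField 𝕜]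
    {Y : 𝕜 → 𝕜} {R : 𝕜[X]} (hY : ∀ z, HasDerivAt Y (R.eval (Y z)) z) (P : 𝕜[X]) :
    deriv (fun z => P.eval (Y z)) = fun z => (derivative P * R).eval (Y z) := by
  funext z
  rw [eval_mul]
  exact ((P.hasDerivAt (Y z)).comp z (hY z)).deriv

/-- Exact solution of the Kuramoto–Sivashinsky travelling-wave equation with σ = 4. -/
theorem ks_exact_solution_sigma4 (φ₀ C₀ : ℝ)
    (Y : ℝ → ℝ) (hYdef : Y = fun z => (1 / 2) * Real.tanh (z / 2 + φ₀))
    (y : ℝ → ℝ)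
    (hydef : y = fun z => 9 / 2 + C₀ - 15 * Y z - 30 * (Y z) ^ 2 + 60 * (Y z) ^ 3) :
    (∀ z, deriv Y z = -(Y z) ^ 2 + 1 / 4) ∧
      ∀ z, deriv (deriv (deriv y)) z + (y z) ^ 2 + 4 * deriv (deriv y) z
        + deriv y z - 2 * C₀ * y z + C₀ ^ 2 - 9 = 0 := by
  have hY : ∀ z, HasDerivAt Y (-(Y z) ^ 2 + 1 / 4) z := hYdef ▸ hasDerivAt_half_tanh φ₀
  refine ⟨fun z => (hY z).deriv, fun z => ?_⟩
  set R : ℝ[X] := -X ^ 2 + C (1 / 4)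
  set P : ℝ[X] := C (9 / 2 + C₀) - 15 * X - 30 * X ^ 2 + 60 * X ^ 3
  have hYR : ∀ z, HasDerivAt Y (R.eval (Y z)) z := fun z => by simpa [R] using hY z
  have hyP : y = fun z => P.eval (Y z) := by
    rw [hydef]; funext z; simp [P]
  simp only [hyP, deriv_eval_comp_of_hasDerivAt hYR]
  simp only [P, R, derivative_add, derivative_sub, derivative_mul, derivative_neg, derivative_C,
    derivative_X_pow, derivative_X, derivative_ofNat, eval_add, eval_sub, eval_mul, eval_neg,
    eval_pow, eval_C, eval_X, eval_ofNat, eval_one, eval_zero, derivative_one, derivative_zero]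
  ring
end

section
/- Let Y : ℝ → ℝ satisfy Y' = -Y² + 1/440, for instance Y(z) = (1/(2√110))·tanh(z/(2√110) + φ₀). Then for any C₀ ∈ ℝ, the function y = C₀ + (189/121)Y - (3780/11)Y³ + 30240Y⁵ satisfies the sixth-order-model travelling-wave equation y''''' - y''' + (3259/12100)y' + (1/2)y² - C₀y - 321489/322102000 + (1/2)C₀² = 0. -/
/-!
Along a solution of the autonomous equation `Y' = Q(Y)`, the derivative of `P(Y)` is `(P' Q)(Y)`
for every polynomial `P`. With `Q = 1/440 - X²` every derivative of `y = P(Y)` is therefore a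
polynomial in `Y`, and the travelling-wave equation becomes an identity between polynomials,
checked by expanding both sides.
-/

open Polynomial

namespace Polynomial

variable {𝕜 : Type*} [NontriviallyNormedField 𝕜]

noncomputable def derivAlong (Q P : 𝕜[X]) : 𝕜[X] :=
  derivative P * Q

theorem hasDerivAt_eval_comp {Q : 𝕜[X]} {Y : 𝕜 → 𝕜} {z : 𝕜}
    (hY : HasDerivAt Y (Q.eval (Y z)) z) (P : 𝕜[X]) :
    HasDerivAt (fun z => P.eval (Y z)) ((derivAlong Q P).eval (Y z)) z := by
  rw [derivAlong, eval_mul]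
  exact (P.hasDerivAt (Y z)).comp z hY

theorem iterate_deriv_eval_comp {Q : 𝕜[X]} {Y : 𝕜 → 𝕜}
    (hY : ∀ z, HasDerivAt Y (Q.eval (Y z)) z) (P : 𝕜[X]) (n : ℕ) :
    deriv^[n] (fun z => P.eval (Y z)) = fun z => ((derivAlong Q)^[n] P).eval (Y z) := by
  induction n generalizing P with
  | zero => rfl
  | succ n ih =>
    have hP : deriv (fun z => P.eval (Y z)) = fun z => (derivAlong Q P).eval (Y z) :=
      _root_.funext fun z => (hasDerivAt_eval_comp (hY z) P).deriv
    rw [Function.iterate_succ_apply, hP, ih, ← Function.iterate_succ_apply]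

end Polynomial

noncomputable def riccatiField : ℝ[X] :=
  -X ^ 2 + C (1 / 440)

noncomputable def waveProfile (C₀ : ℝ) : ℝ[X] :=
  C C₀ + C (189 / 121) * X - C (3780 / 11) * X ^ 3 + C 30240 * X ^ 5

theorem waveProfile_travellingWave (C₀ : ℝ) :
    (derivAlong riccatiField)^[5] (waveProfile C₀) - (derivAlong riccatiField)^[3] (waveProfile C₀)
      + C (3259 / 12100) * derivAlong riccatiField (waveProfile C₀)
      + C (1 / 2) * waveProfile C₀ ^ 2 - C C₀ * waveProfile C₀
      - C (321489 / 322102000) + C (1 / 2 * C₀ ^ 2) = 0 := by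
  refine Polynomial.funext fun t => ?_
  simp only [waveProfile, riccatiField, Function.iterate_succ_apply', Function.iterate_zero_apply,
    derivAlong, derivative_add, derivative_sub, derivative_mul, derivative_C, derivative_X,
    derivative_X_pow, derivative_neg, derivative_one, derivative_zero, eval_add, eval_sub,
    eval_mul, eval_neg, eval_C, eval_X, eval_pow, eval_one, eval_zero]
  ring

/-- If `Y' = -Y² + 1/440`, then `y = C₀ + (189/121)Y - (3780/11)Y³ + 30240Y⁵`
solves `y''''' - y''' + (3259/12100)y' + y²/2 - C₀y - 321489/322102000 + C₀²/2 = 0`. -/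
theorem sixth_order_model_exact_solution_1 (Y : ℝ → ℝ) (C₀ : ℝ)
    (hY : Differentiable ℝ Y)
    (hRic : ∀ z, deriv Y z = -(Y z) ^ 2 + 1 / 440)
    (y : ℝ → ℝ)
    (hydef : y = fun z => C₀ + (189 / 121) * Y z - (3780 / 11) * (Y z) ^ 3
      + 30240 * (Y z) ^ 5) :
    ∀ z, deriv (deriv (deriv (deriv (deriv y)))) z
      - deriv (deriv (deriv y)) z
      + (3259 / 12100) * deriv y z
      + (1 / 2) * (y z) ^ 2 - C₀ * y z
      - 321489 / 322102000 + (1 / 2) * C₀ ^ 2 = 0 := by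
  have hYQ : ∀ z, HasDerivAt Y (riccatiField.eval (Y z)) z := fun z => by
    simpa [riccatiField, hRic] using (hY z).hasDerivAt
  have hyP : y = fun z => (waveProfile C₀).eval (Y z) := by simp [hydef, waveProfile]
  intro z
  have hpoly := congrArg (eval (Y z)) (waveProfile_travellingWave C₀)
  simp only [eval_add, eval_sub, eval_mul, eval_C, eval_pow, eval_zero] at hpoly
  show deriv^[5] y z - deriv^[3] y z + 3259 / 12100 * deriv^[1] y z + 1 / 2 * y z ^ 2
    - C₀ * y z - 321489 / 322102000 + 1 / 2 * C₀ ^ 2 = 0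
  rw [hyP]
  simp only [iterate_deriv_eval_comp hYQ, Function.iterate_one]
  linear_combination hpoly
end
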